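/- For n ≥ 1, in the exterior algebra Λ_n over ℝ on generators ε_0,…,ε_n, with codegeneracies s^j : Λ_n → Λ_{n−1} (0 ≤ j ≤ n−1) given by s^j(ε_k) = ε_k for k ≤ j and s^j(ε_k) = ε_{k−1} for k > j, the normalized part ⋂_{j=1}^{n} ker(s^{j−1} : Λ_n → Λ_{n−1}) is the two-dimensional ℝ-linear span of Δ_n = (ε_1 − ε_0)(ε_2 − ε_1)⋯(ε_n − ε_{n−1}) and π_n = ε_0 ε_1 ⋯ ε_n. -/

import Mathlib

/-! Statement 17: the normalized part `⋂_{j=1}^n ker (s^{j-1} : Λ_n → Λ_{n-1})` is the span of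
`Δ_n = (ε_1 - ε_0)⋯(ε_n - ε_{n-1})` and `π_n = ε_0 ε_1 ⋯ ε_n`. -/

noncomputable section

/-- `Λ_n`: the exterior algebra over `ℝ` on the generators `ε_0, …, ε_n`. -/
abbrev Lam (n : ℕ) := ExteriorAlgebra ℝ (Fin (n + 1) → ℝ)

/-- The generator `ε_i ∈ Λ_n`. -/
def eps (n : ℕ) (i : Fin (n + 1)) : Lam n := ExteriorAlgebra.ι ℝ (Pi.single i 1)

/-- The algebra homomorphism `Λ_a → Λ_b` sending `ε_i ↦ ε_{g i}`. -/
def genMap {a b : ℕ} (g : Fin (a + 1) → Fin (b + 1)) : Lam a →ₐ[ℝ] Lam b :=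
  ExteriorAlgebra.lift ℝ
    ⟨(ExteriorAlgebra.ι ℝ).comp
        (∑ i : Fin (a + 1),
          (LinearMap.single ℝ (fun _ : Fin (b + 1) => ℝ) (g i)).comp (LinearMap.proj i)),
      fun m => ExteriorAlgebra.ι_sq_zero _⟩

/-- The codegeneracy `s^j : Λ_{m+1} → Λ_m` (`0 ≤ j ≤ m`): `s^j(ε_i) = ε_i` for `i ≤ j` and
`s^j(ε_i) = ε_{i-1}` for `i > j`. -/
def sdeg (m : ℕ) (j : Fin (m + 1)) : Lam (m + 1) →ₐ[ℝ] Lam m :=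
  genMap (fun i : Fin (m + 2) => Fin.predAbove j i)

/-- `Δ_n = (ε_1 - ε_0)(ε_2 - ε_1) ⋯ (ε_n - ε_{n-1}) ∈ Λ_n`. -/
def Delta (n : ℕ) : Lam n :=
  ((List.finRange n).map (fun i : Fin n => eps n i.succ - eps n i.castSucc)).prod

/-- `π_n = ε_0 ε_1 ⋯ ε_n ∈ Λ_n`. -/
def piTop (n : ℕ) : Lam n :=
  ((List.finRange (n + 1)).map (fun i => eps n i)).prod

/-!
Let `η = ε_1 - ε_0 ∈ Λ_{n+1}` and let `d⁰ : Λ_n → Λ_{n+1}` be the coface `ε_k ↦ ε_{k+1}`. Since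
`ℝ^{n+2}` is the direct sum of the image of `d⁰` and `ℝ η`, every `x ∈ Λ_{n+1}` is
`d⁰ a + η d⁰ b`. The codegeneracy `s⁰` retracts `d⁰` and kills `η`, so `ker s⁰ = η d⁰ Λ_n`, and
`b` is determined by `x` (contract with the coordinate functional of `ε_0`). The remaining
codegeneracies fix `η` and satisfy `s^{j+1} d⁰ = d⁰ s^j`, so `η d⁰ b` is normalized exactly when
`b` is. As `η d⁰ Δ_n = Δ_{n+1}` and `η d⁰ π_n = -π_{n+1}`, induction starting from
`Λ_0 = span {1, ε_0} = span {Δ_0, π_0}` gives the claim.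
-/

namespace ExteriorAlgebra

-- `i`, `w` are the inclusions and `r`, `d` the coordinates of a splitting `M = i N ⊕ R w`.
variable {R M N : Type*} [CommRing R] [AddCommGroup M] [Module R M] [AddCommGroup N] [Module R N]
  {i : N →ₗ[R] M} {r : M →ₗ[R] N} {d : Module.Dual R M} {w : M}

theorem exists_eq_map_add_ι_mul_map (h : ∀ v, i (r v) + d v • w = v)
    (x : ExteriorAlgebra R M) : ∃ a b, x = map i a + ι R w * map i b := by
  induction x using CliffordAlgebra.left_induction with
  | algebraMap c => exact ⟨algebraMap R _ c, 0, by simp⟩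
  | add x y hx hy =>
    obtain ⟨a, b, rfl⟩ := hx
    obtain ⟨a', b', rfl⟩ := hy
    exact ⟨a + a', b + b', by simp only [map_add, mul_add]; abel⟩
  | ι_mul x v hx =>
    obtain ⟨a, b, rfl⟩ := hx
    refine ⟨ι R (r v) * a, d v • a - ι R (r v) * b, ?_⟩
    have hv : ι R v = map i (ι R (r v)) + d v • ι R w := by
      rw [map_apply_ι, ← map_smul, ← map_add, h]
    have hswap : map i (ι R (r v)) * ι R w = -(ι R w * map i (ι R (r v))) := by
      rw [map_apply_ι, eq_neg_iff_add_eq_zero, ι_add_mul_swap]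
    rw [hv, map_mul, map_sub, map_smul, map_mul]
    simp only [add_mul, mul_add, mul_sub, smul_mul_assoc, mul_smul_comm, ← mul_assoc, hswap,
      ι_sq_zero, zero_mul, smul_zero, neg_mul]
    abel

theorem map_eq_zero_iff_exists_eq_ι_mul_map (h : ∀ v, i (r v) + d v • w = v)
    (hri : Function.LeftInverse r i) (hrw : r w = 0) (x : ExteriorAlgebra R M) :
    map r x = 0 ↔ ∃ b, x = ι R w * map i b := by
  constructor
  · intro hx
    obtain ⟨a, b, rfl⟩ := exists_eq_map_add_ι_mul_map h x
    rw [map_add, map_mul, map_apply_ι, hrw, map_zero, zero_mul, add_zero,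
      leftInverse_map_iff.mpr hri a] at hx
    exact ⟨b, by rw [hx, map_zero, zero_add]⟩
  · rintro ⟨b, rfl⟩
    rw [map_mul, map_apply_ι, hrw, map_zero, zero_mul]

theorem contractLeft_map_eq_zero (hdi : d ∘ₗ i = 0) (x : ExteriorAlgebra R N) :
    CliffordAlgebra.contractLeft (Q := 0) d (map i x) = 0 := by
  induction x using CliffordAlgebra.left_induction with
  | algebraMap c => simp
  | add x y hx hy => rw [map_add, map_add, hx, hy, add_zero]
  | ι_mul x u hx =>
    rw [map_mul, map_apply_ι, CliffordAlgebra.contractLeft_ι_mul, hx, mul_zero, sub_zero,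
      ← LinearMap.comp_apply, hdi, LinearMap.zero_apply, zero_smul]

theorem ι_mul_map_eq_zero_iff (hri : Function.LeftInverse r i) (hdi : d ∘ₗ i = 0) (hdw : d w = 1)
    (b : ExteriorAlgebra R N) : ι R w * map i b = 0 ↔ b = 0 := by
  refine ⟨fun hb => ?_, fun hb => by rw [hb, map_zero, mul_zero]⟩
  have hcontract := congrArg (CliffordAlgebra.contractLeft (Q := 0) d) hb
  rw [CliffordAlgebra.contractLeft_ι_mul, contractLeft_map_eq_zero hdi, hdw, one_smul, mul_zero,
    sub_zero, map_zero] at hcontract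
  rw [← leftInverse_map_iff.mpr hri b, hcontract, map_zero]

end ExteriorAlgebra

open ExteriorAlgebra

theorem Fin.predAbove_succ_succ {n : ℕ} (j : Fin n) (k : Fin (n + 1)) :
    j.succ.predAbove k.succ = (j.predAbove k).succ := by
  rcases le_or_gt k j.castSucc with h | h
  · rw [Fin.predAbove_of_le_castSucc _ _ h, Fin.predAbove_of_le_castSucc _ _
      (by simpa [Fin.le_def] using h)]
    ext; simp
  · rw [Fin.predAbove_of_castSucc_lt _ _ h, Fin.predAbove_of_castSucc_lt _ _
      (by simpa [Fin.lt_def] using h)]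
    ext; simp

def coordMap {a b : ℕ} (g : Fin (a + 1) → Fin (b + 1)) :
    (Fin (a + 1) → ℝ) →ₗ[ℝ] (Fin (b + 1) → ℝ) :=
  ∑ i : Fin (a + 1), (LinearMap.single ℝ (fun _ : Fin (b + 1) => ℝ) (g i)).comp (LinearMap.proj i)

theorem genMap_eq_map {a b : ℕ} (g : Fin (a + 1) → Fin (b + 1)) :
    genMap g = ExteriorAlgebra.map (coordMap g) :=
  rfl

theorem coordMap_single {a b : ℕ} (g : Fin (a + 1) → Fin (b + 1)) (k : Fin (a + 1)) (c : ℝ) :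
    coordMap g (Pi.single k c) = Pi.single (g k) c := by
  simp [coordMap, LinearMap.sum_apply, Pi.single_apply, apply_ite (Pi.single _)]

theorem coordMap_comp {a b c : ℕ} (g : Fin (b + 1) → Fin (c + 1)) (f : Fin (a + 1) → Fin (b + 1)) :
    coordMap g ∘ₗ coordMap f = coordMap (g ∘ f) :=
  LinearMap.pi_ext fun k x => by
    simp only [LinearMap.comp_apply, coordMap_single, Function.comp_apply]

theorem coordMap_id (a : ℕ) : coordMap (id : Fin (a + 1) → Fin (a + 1)) = LinearMap.id :=
  LinearMap.pi_ext fun k x => by rw [coordMap_single, id, LinearMap.id_apply]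

theorem genMap_comp {a b c : ℕ} (g : Fin (b + 1) → Fin (c + 1)) (f : Fin (a + 1) → Fin (b + 1)) :
    (genMap g).comp (genMap f) = genMap (g ∘ f) := by
  rw [genMap_eq_map, genMap_eq_map, map_comp_map, coordMap_comp, genMap_eq_map]

theorem genMap_eps {a b : ℕ} (g : Fin (a + 1) → Fin (b + 1)) (k : Fin (a + 1)) :
    genMap g (eps a k) = eps b (g k) := by
  rw [genMap_eq_map, eps, map_apply_ι, coordMap_single, eps]

theorem genMap_ιMulti {a b : ℕ} (g : Fin (a + 1) → Fin (b + 1)) {k : ℕ}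
    (v : Fin k → Fin (a + 1) → ℝ) :
    genMap g (ιMulti ℝ k v) = ιMulti ℝ k (coordMap g ∘ v) :=
  map_apply_ιMulti _ _

theorem sdeg_eps (m : ℕ) (j : Fin (m + 1)) (k : Fin (m + 2)) :
    sdeg m j (eps (m + 1) k) = eps m (j.predAbove k) :=
  genMap_eps _ k

theorem Delta_eq_ιMulti (n : ℕ) :
    Delta n = ιMulti ℝ n (fun i => Pi.single i.succ 1 - Pi.single i.castSucc 1) := by
  rw [Delta, ιMulti_apply, List.ofFn_eq_map]
  simp only [eps, map_sub]

theorem piTop_eq_ιMulti (n : ℕ) : piTop n = ιMulti ℝ (n + 1) (fun i => Pi.single i 1) := by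
  rw [piTop, ιMulti_apply, List.ofFn_eq_map]
  rfl

def eta (n : ℕ) : Lam (n + 1) := eps (n + 1) 1 - eps (n + 1) 0

section ZerothCoordinate

variable (n : ℕ)

theorem eta_eq_ι : eta n = ι ℝ (Pi.single 1 1 - Pi.single 0 1 : Fin (n + 2) → ℝ) := by
  rw [eta, eps, eps, map_sub]

theorem leftInverse_coordMap_predAbove_zero_succ :
    Function.LeftInverse (coordMap (Fin.predAbove (0 : Fin (n + 1))))
      (coordMap (Fin.succ : Fin (n + 1) → Fin (n + 2))) := by
  intro u
  rw [← LinearMap.comp_apply, coordMap_comp]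
  have hid : Fin.predAbove (0 : Fin (n + 1)) ∘ Fin.succ = id :=
    funext fun _ => Fin.predAbove_zero_succ
  rw [hid, coordMap_id, LinearMap.id_apply]

theorem coordMap_succ_predAbove_zero_add_smul (v : Fin (n + 2) → ℝ) :
    coordMap Fin.succ (coordMap (Fin.predAbove 0) v) + (-v 0) • (Pi.single 1 1 - Pi.single 0 1) =
      v := by
  have key : coordMap Fin.succ ∘ₗ coordMap (Fin.predAbove (0 : Fin (n + 1))) +
      (-LinearMap.proj 0 : Module.Dual ℝ (Fin (n + 2) → ℝ)).smulRight
        (Pi.single 1 1 - Pi.single 0 1) = LinearMap.id := by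
    refine LinearMap.pi_ext fun k x => ?_
    cases k using Fin.cases with
    | zero =>
      have hsingle (i : Fin (n + 2)) : x • Pi.single i (1 : ℝ) = Pi.single i x := by
        rw [← Pi.single_smul', smul_eq_mul, mul_one]
      simp [coordMap_single, smul_sub, hsingle]
    | succ k => simp [coordMap_single]
  exact LinearMap.congr_fun key v

theorem sdeg_zero_eq_zero_iff (x : Lam (n + 1)) :
    sdeg n 0 x = 0 ↔ ∃ b, x = eta n * genMap Fin.succ b := by
  simp_rw [eta_eq_ι]
  refine map_eq_zero_iff_exists_eq_ι_mul_map (d := -LinearMap.proj 0) ?_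
    (leftInverse_coordMap_predAbove_zero_succ n) ?_ x
  · exact coordMap_succ_predAbove_zero_add_smul n
  · simp [coordMap_single]

theorem eta_mul_genMap_succ_eq_zero_iff (b : Lam n) : eta n * genMap Fin.succ b = 0 ↔ b = 0 := by
  rw [eta_eq_ι]
  refine ι_mul_map_eq_zero_iff (d := -LinearMap.proj 0)
    (leftInverse_coordMap_predAbove_zero_succ n) ?_ ?_ b
  · exact LinearMap.pi_ext fun k x => by simp [coordMap_single]
  · simp

end ZerothCoordinate

theorem sdeg_succ_genMap_succ (n : ℕ) (j : Fin (n + 1)) (b : Lam (n + 1)) :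
    sdeg (n + 1) j.succ (genMap Fin.succ b) = genMap Fin.succ (sdeg n j b) := by
  rw [sdeg, sdeg, ← AlgHom.comp_apply, ← AlgHom.comp_apply, genMap_comp, genMap_comp]
  congr 2
  exact funext fun k => Fin.predAbove_succ_succ j k

theorem sdeg_succ_eta (n : ℕ) (j : Fin (n + 1)) : sdeg (n + 1) j.succ (eta (n + 1)) = eta n := by
  have h1 : j.succ.predAbove 1 = 1 := Fin.predAbove_succ_succ j 0
  rw [eta, map_sub, sdeg_eps, sdeg_eps, h1, Fin.predAbove_right_zero, eta]

theorem Delta_succ (n : ℕ) : Delta (n + 1) = eta n * genMap Fin.succ (Delta n) := by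
  rw [Delta_eq_ιMulti, ιMulti_succ_apply, Delta_eq_ιMulti, genMap_ιMulti, eta_eq_ι]
  congr 2
  funext i
  simp only [Function.comp_apply, Matrix.vecTail, map_sub, coordMap_single, Fin.succ_castSucc]

theorem piTop_eq_eps_zero_mul (n : ℕ) :
    piTop n = eps n 0 * ιMulti ℝ n (fun i => Pi.single i.succ 1) := by
  rw [piTop_eq_ιMulti, ιMulti_succ_apply]
  rfl

theorem piTop_succ (n : ℕ) : piTop (n + 1) = eps (n + 1) 0 * genMap Fin.succ (piTop n) := by
  rw [piTop_eq_eps_zero_mul, piTop_eq_ιMulti, genMap_ιMulti]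
  congr 2
  funext i
  simp [coordMap_single]

theorem eta_mul_genMap_succ_piTop (n : ℕ) :
    eta n * genMap Fin.succ (piTop n) = -piTop (n + 1) := by
  have h1 : eps (n + 1) 1 * genMap Fin.succ (piTop n) = 0 := by
    rw [piTop_eq_eps_zero_mul, map_mul, genMap_eps, Fin.succ_zero_eq_one, ← mul_assoc, eps,
      ι_sq_zero, zero_mul]
  rw [eta, sub_mul, h1, ← piTop_succ, zero_sub]

theorem sdeg_Delta (m : ℕ) (j : Fin (m + 1)) : sdeg m j (Delta (m + 1)) = 0 := by
  rw [Delta_eq_ιMulti, sdeg, genMap_ιMulti]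
  refine AlternatingMap.map_coord_zero _ j ?_
  simp [coordMap_single]

theorem sdeg_piTop (m : ℕ) (j : Fin (m + 1)) : sdeg m j (piTop (m + 1)) = 0 := by
  rw [piTop_eq_ιMulti, sdeg, genMap_ιMulti]
  refine ιMulti_eq_zero_of_not_inj fun hinj => (Fin.castSucc_lt_succ (i := j)).ne (hinj ?_)
  simp [coordMap_single]

theorem mem_span_Delta_zero_piTop_zero (b : Lam 0) : b ∈ Submodule.span ℝ {Delta 0, piTop 0} := by
  have hDelta : Delta 0 = 1 := by rw [Delta_eq_ιMulti, ιMulti_zero_apply]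
  have hpi : piTop 0 = eps 0 0 := by rw [piTop_eq_eps_zero_mul, ιMulti_zero_apply, mul_one]
  induction b using CliffordAlgebra.left_induction with
  | algebraMap c =>
    rw [Algebra.algebraMap_eq_smul_one]
    exact Submodule.smul_mem _ _ (Submodule.subset_span (hDelta ▸ Set.mem_insert _ _))
  | add x y hx hy => exact Submodule.add_mem _ hx hy
  | ι_mul x v hx =>
    obtain ⟨a, c, rfl⟩ := Submodule.mem_span_pair.mp hx
    have hv : ι ℝ v = v 0 • eps 0 0 := by
      rw [eps, ← map_smul]
      congr 1
      exact funext fun i => by fin_cases i; simp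
    refine Submodule.mem_span_pair.mpr ⟨0, v 0 * a, ?_⟩
    rw [hDelta, hpi, hv, mul_add, smul_mul_smul_comm, smul_mul_smul_comm, mul_one, eps, ι_sq_zero,
      smul_zero, add_zero, zero_smul, zero_add]

theorem eta_mul_genMap_succ_mem_span {n : ℕ} {b : Lam n}
    (hb : b ∈ Submodule.span ℝ {Delta n, piTop n}) :
    eta n * genMap Fin.succ b ∈ Submodule.span ℝ {Delta (n + 1), piTop (n + 1)} := by
  obtain ⟨a, c, rfl⟩ := Submodule.mem_span_pair.mp hb
  rw [map_add, map_smul, map_smul, mul_add, mul_smul_comm, mul_smul_comm, ← Delta_succ,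
    eta_mul_genMap_succ_piTop, smul_neg, ← neg_smul]
  exact Submodule.mem_span_pair.mpr ⟨a, -c, rfl⟩

theorem mem_span_Delta_piTop_of_sdeg_eq_zero :
    ∀ (m : ℕ) (x : Lam (m + 1)), (∀ j : Fin (m + 1), sdeg m j x = 0) →
      x ∈ Submodule.span ℝ {Delta (m + 1), piTop (m + 1)}
  | 0, x, hx => by
    obtain ⟨b, rfl⟩ := (sdeg_zero_eq_zero_iff 0 x).mp (hx 0)
    exact eta_mul_genMap_succ_mem_span (mem_span_Delta_zero_piTop_zero b)
  | k + 1, x, hx => by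
    obtain ⟨b, rfl⟩ := (sdeg_zero_eq_zero_iff (k + 1) x).mp (hx 0)
    refine eta_mul_genMap_succ_mem_span (mem_span_Delta_piTop_of_sdeg_eq_zero k b fun j => ?_)
    have hj := hx j.succ
    rwa [map_mul, sdeg_succ_eta, sdeg_succ_genMap_succ, eta_mul_genMap_succ_eq_zero_iff] at hj

/-- For `n = m + 1 ≥ 1`, the normalized part
`⋂_{j=1}^{n} ker (s^{j-1} : Λ_n → Λ_{n-1})` is the two-dimensional span of `Δ_n` and `π_n`. -/
theorem stmt_17 (m : ℕ) :
    {x : Lam (m + 1) | ∀ j : Fin (m + 1), sdeg m j x = 0} =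
      ↑(Submodule.span ℝ {Delta (m + 1), piTop (m + 1)}) := by
  ext x
  refine ⟨mem_span_Delta_piTop_of_sdeg_eq_zero m x, fun hx j => ?_⟩
  obtain ⟨a, c, rfl⟩ := Submodule.mem_span_pair.mp hx
  rw [map_add, map_smul, map_smul, sdeg_Delta, sdeg_piTop, smul_zero, smul_zero, add_zero]
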